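/- arXiv:0811.1733 — 3 statements merged into one kernel-verified Lean document; each statement's English description precedes it below -/
import Mathlib

section
/- For all nonnegative integers p, q, i, j, the generalized Eulerian number satisfies the closed formula A_{p,q}(i,j) = \sum_{t=0}^{j} (-1)^{j-t} · C(p+q+t+1, t) · C(p+q+i+j+2, j-t) · (q+1+t)^{i+j}, as an identity of integers, where C(n,k) denotes the binomial coefficient. -/
/-!
Write the right-hand side as a sum `S(n, M, j)` in which the exponent `n = i + j` and the upper
binomial index `M = p + q + i + j + 2` are free parameters. Pascal's rule together with
`(u + 1) C(M, u + 1) = (M - u) C(M, u)` gives, term by term,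
`S(n+1, M+1, j+1) = (q + j + 2) S(n, M, j+1) + (M - q - j - 1) S(n, M, j)`.
For `M = p + q + i + j + 3` this is the defining recurrence of `eulerA`. On the row `i = 0` the same
identity applies with `M = p + q + j + 2`: there the first term is, by trinomial revision, a multiple
of the `(j+1)`-st forward difference of `x ↦ x ^ j`, hence zero, leaving the factor `p + 1`.
-/

open Finset

/-- The generalized Eulerian number `eulerA p q i j` counts the paths in the Euler graph
from `(p, q)` to `(p + i, q + j)`.  It is defined by the initial conditions
`eulerA p q i 0 = (q+1)^i`, `eulerA p q 0 j = (p+1)^j` and the recurrence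
`eulerA p q i j = (j+q+1) * eulerA p q (i-1) j + (i+p+1) * eulerA p q i (j-1)`. -/
def eulerA (p q : ℕ) : ℕ → ℕ → ℕ
  | i, 0 => (q + 1) ^ i
  | 0, j + 1 => (p + 1) ^ (j + 1)
  | i + 1, j + 1 =>
      (j + 1 + q + 1) * eulerA p q i (j + 1) + (i + 1 + p + 1) * eulerA p q (i + 1) j

section Binomial

variable {R : Type*} [CommRing R]

theorem Nat.cast_choose_succ_right_eq (M u : ℕ) :
    (M.choose (u + 1) : R) * (u + 1) = M.choose u * ((M : R) - u) := by
  rcases le_or_gt u M with h | h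
  · rw [← Nat.cast_sub h]
    exact_mod_cast congrArg (Nat.cast : ℕ → R) (Nat.choose_succ_right_eq M u)
  · simp [Nat.choose_eq_zero_of_lt h, Nat.choose_eq_zero_of_lt (Nat.lt_succ_of_lt h)]

theorem Nat.mul_cast_choose_succ_succ (s : R) (M u : ℕ) :
    s * (M + 1).choose (u + 1) = (s + u + 1) * M.choose (u + 1) - (M - u - s) * M.choose u := by
  rw [Nat.choose_succ_succ', Nat.cast_add]
  linear_combination -Nat.cast_choose_succ_right_eq (R := R) M u

end Binomial

theorem Nat.add_choose_mul_add_choose (b t u : ℕ) :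
    (b + t).choose t * (b + t + u).choose u = (b + t + u).choose b * (t + u).choose t := by
  have h := Nat.choose_mul (n := b + t + u) (k := b + t) (s := b) (Nat.le_add_right b t)
  rwa [Nat.choose_symm_add (a := b + t), Nat.choose_symm_add (a := b),
    show b + t + u - b = t + u by omega, Nat.add_sub_cancel_left, mul_comm] at h

/-- `eulerSum (p + q) q (i + j) (p + q + i + j + 2) j` is the closed formula for `eulerA p q i j`,
summed over `t + u = j` instead of `t ≤ j`. -/
def eulerSum (a q n M j : ℕ) : ℤ :=
  ∑ x ∈ antidiagonal j,
    (-1) ^ x.2 * ((a + x.1 + 1).choose x.1 : ℤ) * (M.choose x.2 : ℤ) * ((q : ℤ) + 1 + x.1) ^ n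

section eulerSum

variable (a q : ℕ)

theorem eulerSum_succ_succ (n M j : ℕ) :
    eulerSum a q (n + 1) (M + 1) (j + 1) =
      ((q : ℤ) + j + 2) * eulerSum a q n M (j + 1) + ((M : ℤ) - q - j - 1) * eulerSum a q n M j := by
  simp only [eulerSum, Nat.sum_antidiagonal_succ', mul_add, mul_sum, add_assoc, ← sum_add_distrib,
    Nat.choose_zero_right]
  congr 1
  · push_cast; ring
  refine sum_congr rfl fun ⟨t, u⟩ htu => ?_
  obtain rfl : t + u = j := mem_antidiagonal.mp htu
  push_cast
  linear_combination (-1) ^ (u + 1) * ((a + t + 1).choose t : ℤ) * ((q : ℤ) + 1 + t) ^ n *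
    Nat.mul_cast_choose_succ_succ ((q : ℤ) + 1 + t) M u

theorem eulerSum_eq_zero_of_lt {d m : ℕ} (h : d < m) : eulerSum a q d (a + m + 1) m = 0 := by
  have hΔ := fwdDiff_iter_eq_sum_shift (h := (1 : ℤ)) (fun r : ℤ => r ^ d) m ((q : ℤ) + 1)
  rw [fwdDiff_iter_pow_eq_zero_of_lt h] at hΔ
  simp only [Pi.zero_apply, smul_eq_mul, nsmul_eq_mul, mul_one] at hΔ
  have hterm : ∀ x ∈ antidiagonal m,
      (-1) ^ x.2 * ((a + x.1 + 1).choose x.1 : ℤ) * ((a + m + 1).choose x.2 : ℤ) *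
        ((q : ℤ) + 1 + x.1) ^ d =
      (a + m + 1).choose (a + 1) * ((-1) ^ x.2 * m.choose x.1 * ((q : ℤ) + 1 + x.1) ^ d) := by
    rintro ⟨t, u⟩ htu
    obtain rfl : t + u = m := mem_antidiagonal.mp htu
    have hchoose := congrArg (Nat.cast : ℕ → ℤ) (Nat.add_choose_mul_add_choose (a + 1) t u)
    push_cast at hchoose
    rw [show a + t + 1 = a + 1 + t by ring, show a + (t + u) + 1 = a + 1 + t + u by ring]
    linear_combination (-1) ^ u * ((q : ℤ) + 1 + t) ^ d * hchoose
  rw [eulerSum, sum_congr rfl hterm, ← mul_sum,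
    Nat.sum_antidiagonal_eq_sum_range_succ (fun t u => (-1) ^ u * m.choose t * ((q : ℤ) + 1 + t) ^ d),
    Nat.succ_eq_add_one, ← hΔ, mul_zero]

theorem eulerSum_diag (p j : ℕ) : eulerSum (p + q) q j (p + q + j + 2) j = ((p : ℤ) + 1) ^ j := by
  induction j with
  | zero => simp [eulerSum]
  | succ j ih =>
    rw [show p + q + (j + 1) + 2 = p + q + j + 2 + 1 by ring, eulerSum_succ_succ, ih,
      show p + q + j + 2 = p + q + (j + 1) + 1 by ring, eulerSum_eq_zero_of_lt _ _ j.lt_succ_self]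
    push_cast; ring

end eulerSum

theorem eulerA_zero_left (p q j : ℕ) : eulerA p q 0 j = (p + 1) ^ j := by
  cases j <;> simp [eulerA]

theorem eulerA_eq_eulerSum (p q i j : ℕ) :
    (eulerA p q i j : ℤ) = eulerSum (p + q) q (i + j) (p + q + i + j + 2) j := by
  induction i generalizing j with
  | zero =>
    rw [eulerA_zero_left, zero_add, add_zero, eulerSum_diag]
    push_cast; rfl
  | succ i ih =>
    induction j with
    | zero => simp [eulerA, eulerSum]
    | succ j ihj =>
      rw [show i + 1 + (j + 1) = i + j + 1 + 1 by ring,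
        show p + q + (i + 1) + (j + 1) + 2 = p + q + i + j + 3 + 1 by ring, eulerSum_succ_succ,
        eulerA, Nat.cast_add, Nat.cast_mul, Nat.cast_mul, ih, ihj]
      push_cast
      ring_nf

theorem stmt3 (p q i j : ℕ) :
    (eulerA p q i j : ℤ) =
      ∑ t ∈ Finset.range (j + 1),
        (-1 : ℤ) ^ (j - t) * (p + q + t + 1).choose t * (p + q + i + j + 2).choose (j - t) *
          ((q : ℤ) + 1 + t) ^ (i + j) := by
  rw [eulerA_eq_eulerSum, eulerSum, Nat.sum_antidiagonal_eq_sum_range_succ_mk]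
end

section
/- Let p, q be nonnegative integers with q ≥ 1. Then the ratio A_{p,q}(i,j)/A_{p,q-1}(i,j) tends to infinity as both i and j tend to infinity: for every real number M there exist I and J such that A_{p,q}(i,j)/A_{p,q-1}(i,j) > M whenever i ≥ I and j ≥ J. -/
lemma eulerA_pos (p q : ℕ) : ∀ i j, 0 < eulerA p q i j
  | i, 0 => by simp [eulerA]
  | 0, j + 1 => by simp [eulerA]
  | i + 1, j + 1 => by
      simp only [eulerA]
      exact Nat.add_pos_left (Nat.mul_pos (by omega) (eulerA_pos p q i (j + 1))) _

lemma add_two_mul_eulerA_succ (p t : ℕ) : ∀ i j : ℕ,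
    (p + t + 2) * eulerA p (t + 1) (i + 1) j
      = (p + t + 3 + i) * eulerA p t (i + 1) j + (j + 1) * eulerA p t i (j + 1)
  | 0, 0 => by simp [eulerA]; ring
  | 0, j + 1 => by
      have ih := add_two_mul_eulerA_succ p t 0 j
      simp only [eulerA] at ih ⊢
      zify at ih ⊢
      linear_combination (p + 2 : ℤ) * ih
  | i + 1, 0 => by
      have ih := add_two_mul_eulerA_succ p t i 0
      simp only [eulerA] at ih ⊢
      zify at ih ⊢
      linear_combination (t + 2 : ℤ) * ih
  | i + 1, j + 1 => by
      have ih_left := add_two_mul_eulerA_succ p t i (j + 1)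
      have ih_down := add_two_mul_eulerA_succ p t (i + 1) j
      simp only [eulerA] at ih_left ih_down ⊢
      zify at ih_left ih_down ⊢
      linear_combination (j + t + 3 : ℤ) * ih_left + (i + p + 3 : ℤ) * ih_down

lemma add_mul_eulerA_le_mul_eulerA_succ (p t i j : ℕ) :
    (p + t + 2 + i) * eulerA p t i j ≤ (p + t + 2) * eulerA p (t + 1) i j := by
  cases i with
  | zero => cases j <;> simp [eulerA]
  | succ i =>
      rw [add_two_mul_eulerA_succ p t i j, show p + t + 2 + (i + 1) = p + t + 3 + i by omega]
      exact Nat.le_add_right _ _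

lemma one_add_div_le_eulerA_div (p t i j : ℕ) :
    1 + (i : ℝ) / (p + t + 2) ≤ (eulerA p (t + 1) i j : ℝ) / eulerA p t i j := by
  have hs : (0 : ℝ) < p + t + 2 := by positivity
  have hA : (0 : ℝ) < eulerA p t i j := by exact_mod_cast eulerA_pos p t i j
  have hle : ((p + t + 2 + i : ℕ) * eulerA p t i j : ℝ) ≤ (p + t + 2 : ℕ) * eulerA p (t + 1) i j :=
    by exact_mod_cast add_mul_eulerA_le_mul_eulerA_succ p t i j
  rw [one_add_div hs.ne', div_le_div_iff₀ hs hA]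
  push_cast at hle
  linarith

theorem stmt9 (p q : ℕ) (hq : 1 ≤ q) :
    ∀ M : ℝ, ∃ I J : ℕ, ∀ i j : ℕ, I ≤ i → J ≤ j →
      M < (eulerA p q i j : ℝ) / (eulerA p (q - 1) i j) := by
  obtain ⟨t, rfl⟩ : ∃ t, q = t + 1 := ⟨q - 1, by omega⟩
  intro M
  refine ⟨⌈M⌉₊ * (p + t + 2), 0, fun i j hi _ => ?_⟩
  have hs : (0 : ℝ) < p + t + 2 := by positivity
  have hM : M ≤ (i : ℝ) / (p + t + 2) := by
    rw [le_div_iff₀ hs]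
    have hi' : ((⌈M⌉₊ * (p + t + 2) : ℕ) : ℝ) ≤ i := by exact_mod_cast hi
    push_cast at hi'
    nlinarith [Nat.le_ceil M]
  calc M < 1 + (i : ℝ) / (p + t + 2) := by linarith
    _ ≤ _ := by simpa using one_add_div_le_eulerA_div p t i j
end

section
/- Let p, q be nonnegative integers with p ≥ 1 and q ≥ 1. Then ((q+1)·A_{p,q-1}(i,j) + (p+1)·A_{p-1,q}(i,j)) / A_{p,q}(i,j) tends to 0 as both i and j tend to infinity: for every ε > 0 there exist I and J such that this ratio is less than ε whenever i ≥ I and j ≥ J. -/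
open Filter Topology

namespace eulerA

variable (p q : ℕ)

lemma zero_right (i : ℕ) : eulerA p q i 0 = (q + 1) ^ i := by
  rw [eulerA]

lemma zero_left (j : ℕ) : eulerA p q 0 j = (p + 1) ^ j := by
  cases j <;> simp [eulerA]

lemma succ_succ (i j : ℕ) :
    eulerA p q (i + 1) (j + 1) =
      (j + q + 2) * eulerA p q i (j + 1) + (i + p + 2) * eulerA p q (i + 1) j := by
  rw [eulerA]; ring

lemma pos (i j : ℕ) : 0 < eulerA p q i j := by
  induction i, j using eulerA.induct <;> rw [eulerA] <;> positivity

lemma swap (i j : ℕ) : eulerA p q i j = eulerA q p j i := by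
  induction i, j using eulerA.induct with
  | case1 i => rw [zero_right, zero_left]
  | case2 j => rw [zero_left, zero_right]
  | case3 i j ih₁ ih₂ => rw [succ_succ, succ_succ, ih₁, ih₂]; ring

lemma one_right_add (i : ℕ) :
    eulerA p q i 1 + (i + p + q + 3) * (q + 1) ^ (i + 1) = (p + q + 2) * (q + 2) ^ (i + 1) := by
  induction i with
  | zero => rw [zero_left]; ring
  | succ i ih =>
    rw [succ_succ, zero_right, zero_add]
    linear_combination (q + 2) * ih

lemma param_succ_mul (i j : ℕ) :
    (p + q + 2) * eulerA p (q + 1) (i + 1) j =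
      (i + p + q + 3) * eulerA p q (i + 1) j + (j + 1) * eulerA p q i (j + 1) := by
  induction i generalizing j with
  | zero =>
    induction j with
    | zero => simp only [zero_right, zero_left]; ring
    | succ j ih =>
      rw [succ_succ, succ_succ, zero_left, zero_left, zero_left]
      rw [zero_left] at ih
      linear_combination (p + 2) * ih
  | succ i ihi =>
    induction j with
    | zero =>
      rw [zero_right, zero_right, zero_add]
      linear_combination (one_right_add p q (i + 1)).symm
    | succ j ihj =>
      rw [succ_succ p (q + 1) (i + 1) j, succ_succ p q (i + 1) j, succ_succ p q i (j + 1)]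
      linear_combination (j + q + 3) * ihi (j + 1) + (i + p + 3) * ihj

lemma mul_le_param_succ_snd (i j : ℕ) :
    (i + (p + q + 2)) * eulerA p q i j ≤ (p + q + 2) * eulerA p (q + 1) i j := by
  cases i with
  | zero => simp only [zero_add, zero_left, le_refl]
  | succ i =>
    rw [param_succ_mul]
    exact le_add_right (le_of_eq (by ring))

lemma mul_le_param_succ_fst (i j : ℕ) :
    (j + (p + q + 2)) * eulerA p q i j ≤ (p + q + 2) * eulerA (p + 1) q i j := by
  rw [swap p q, swap (p + 1) q, add_comm p q]
  exact mul_le_param_succ_snd q p j i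

lemma div_param_succ_snd_le (i j : ℕ) :
    (eulerA p q i j : ℝ) / eulerA p (q + 1) i j ≤ (p + q + 2) / (i + (p + q + 2)) := by
  rw [div_le_div_iff₀ (mod_cast pos p (q + 1) i j) (by positivity), mul_comm]
  exact_mod_cast mul_le_param_succ_snd p q i j

lemma div_param_succ_fst_le (i j : ℕ) :
    (eulerA p q i j : ℝ) / eulerA (p + 1) q i j ≤ (p + q + 2) / (j + (p + q + 2)) := by
  rw [div_le_div_iff₀ (mod_cast pos (p + 1) q i j) (by positivity), mul_comm]
  exact_mod_cast mul_le_param_succ_fst p q i j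

end eulerA

lemma tendsto_const_div_natCast_add (d : ℝ) :
    Tendsto (fun n : ℕ => d / (n + d)) atTop (𝓝 0) :=
  tendsto_const_nhds.div_atTop (tendsto_natCast_atTop_atTop.atTop_add tendsto_const_nhds)

theorem tendsto_eulerA_ratio (p q : ℕ) :
    Tendsto (fun x : ℕ × ℕ => (((q : ℝ) + 2) * eulerA (p + 1) q x.1 x.2 +
      ((p : ℝ) + 2) * eulerA p (q + 1) x.1 x.2) / eulerA (p + 1) (q + 1) x.1 x.2)
      (atTop ×ˢ atTop) (𝓝 0) := by
  set d : ℝ := p + q + 3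
  have hlim : Tendsto (fun x : ℕ × ℕ => (q + 2) * (d / (x.1 + d)) + (p + 2) * (d / (x.2 + d)))
      (atTop ×ˢ atTop) (𝓝 0) := by
    simpa using (((tendsto_const_div_natCast_add d).comp tendsto_fst).const_mul ((q : ℝ) + 2)).add
      (((tendsto_const_div_natCast_add d).comp tendsto_snd).const_mul ((p : ℝ) + 2))
  refine tendsto_of_tendsto_of_tendsto_of_le_of_le tendsto_const_nhds hlim
    (fun _ => by positivity) ?_
  rintro ⟨i, j⟩
  have h₁ := eulerA.div_param_succ_snd_le (p + 1) q i j
  have h₂ := eulerA.div_param_succ_fst_le p (q + 1) i j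
  push_cast at h₁ h₂
  dsimp only
  rw [add_div, mul_div_assoc, mul_div_assoc]
  refine add_le_add (mul_le_mul_of_nonneg_left (h₁.trans_eq ?_) (by positivity))
    (mul_le_mul_of_nonneg_left (h₂.trans_eq ?_) (by positivity)) <;> ring

theorem stmt11 (p q : ℕ) (hp : 1 ≤ p) (hq : 1 ≤ q) :
    ∀ ε : ℝ, 0 < ε → ∃ I J : ℕ, ∀ i j : ℕ, I ≤ i → J ≤ j →
      (((q : ℝ) + 1) * (eulerA p (q - 1) i j) + ((p : ℝ) + 1) * (eulerA (p - 1) q i j)) /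
          (eulerA p q i j) < ε := by
  intro ε hε
  obtain ⟨p, rfl⟩ := Nat.exists_eq_add_of_le' hp
  obtain ⟨q, rfl⟩ := Nat.exists_eq_add_of_le' hq
  have hev := (tendsto_eulerA_ratio p q).eventually (gt_mem_nhds hε)
  rw [prod_atTop_atTop_eq] at hev
  obtain ⟨N, hN⟩ := eventually_atTop_prod_self'.mp hev
  refine ⟨N, N, fun i j hi hj => ?_⟩
  simpa only [Nat.add_sub_cancel, Nat.cast_add_one, add_assoc, one_add_one_eq_two]
    using hN i hi j hj
end
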